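/- arXiv:2407.20307 — 9 statements merged into one kernel-verified Lean document; each statement's English description precedes it below -/
import Mathlib

section
/- The relation ≺ on pairs of objects in locally small categories is transitive: if (A,X)_A ≺ (B,Y)_B and (B,Y)_B ≺ (C,Z)_C, then (A,X)_A ≺ (C,Z)_C. -/
open CategoryTheory

/-- The piggyback relation `(A,X)_𝐀 ≺ (B,Y)_𝐁`. -/
def Piggy {A : Type*} [Category A] {B : Type*} [Category B]
    (a x : A) (b y : B) : Prop :=
  ∃ (M : Set (b ⟶ y)) (φ : M → (a ⟶ x)),
    ∀ h : y ⟶ y, ∃ g : x ⟶ x,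
      {f : a ⟶ x | ∃ e : a ⟶ x, f = e ≫ g} ⊆
        φ '' {m : M | ∃ e : b ⟶ y, (m : b ⟶ y) = e ≫ h}

/-- Transitivity of the piggyback relation. -/
theorem piggy_trans {A : Type*} [Category A] {B : Type*} [Category B]
    {C : Type*} [Category C]
    (a x : A) (b y : B) (c z : C)
    (h₁ : Piggy a x b y) (h₂ : Piggy b y c z) :
    Piggy a x c z := by
  obtain ⟨M, φ, hM⟩ := h₁
  obtain ⟨N, ψ, hN⟩ := h₂
  refine ⟨{n | ∃ hn : n ∈ N, (ψ ⟨n, hn⟩ : b ⟶ y) ∈ M},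
    fun n => φ ⟨ψ ⟨n.1, n.2.choose⟩, n.2.choose_spec⟩, ?_⟩
  intro h
  obtain ⟨gB, hgB⟩ := hN h
  obtain ⟨g, hg⟩ := hM gB
  refine ⟨g, ?_⟩
  intro f hf
  obtain ⟨⟨m, hmM⟩, ⟨e', hm_eq⟩, hfm⟩ := hg hf
  have hmem : m ∈ {f : b ⟶ y | ∃ e : b ⟶ y, f = e ≫ gB} := ⟨e', hm_eq⟩
  obtain ⟨⟨n, hnN⟩, ⟨e'', hn_eq⟩, hψn⟩ := hgB hmem
  have hn' : n ∈ {n | ∃ hn : n ∈ N, (ψ ⟨n, hn⟩ : b ⟶ y) ∈ M} :=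
    ⟨hnN, by rw [hψn]; exact hmM⟩
  refine ⟨⟨n, hn'⟩, ⟨e'', hn_eq⟩, ?_⟩
  have h1 : (⟨ψ ⟨n, hn'.choose⟩, hn'.choose_spec⟩ : M) = ⟨m, hmM⟩ := by
    apply Subtype.ext
    simpa using hψn
  simp only [h1]
  exact hfm
end

section
/- Let A be a locally small category with objects A, X, X' such that X and X' are hom-equivalent (Hom(X,X') and Hom(X',X) are both nonempty), and let B be a locally small category with objects B, Y. If (A,X)_A ≺ (B,Y)_B then (A,X')_A ≺ (B,Y)_B. -/
open CategoryTheory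

/-- Replacing `X` by a hom-equivalent `X'` preserves `≺`. -/
theorem piggy_hom_equiv {A : Type*} [Category A] {B : Type*} [Category B]
    (a x x' : A) (b y : B)
    (hxx' : Nonempty (x ⟶ x')) (hx'x : Nonempty (x' ⟶ x))
    (hp : Piggy a x b y) :
    Piggy a x' b y := by
  obtain ⟨u⟩ := hxx'
  obtain ⟨v⟩ := hx'x
  obtain ⟨M, φ, hφ⟩ := hp
  refine ⟨M, fun m => φ m ≫ u, fun h => ?_⟩
  obtain ⟨g, hg⟩ := hφ h
  refine ⟨v ≫ g ≫ u, ?_⟩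
  rintro f ⟨e, rfl⟩
  obtain ⟨m, hm, hφm⟩ := hg (show (e ≫ v) ≫ g ∈ _ from ⟨e ≫ v, rfl⟩)
  exact ⟨m, hm, by simp [hφm]⟩
end

section
/- Let A_1,…,A_n and B_1,…,B_n be locally small categories, with objects A_i, X_i in A_i and B_i, Y_i in B_i. If (A_i, X_i) ≺ (B_i, Y_i) for each i, then in the product categories, ((A_1,…,A_n), (X_1,…,X_n)) ≺ ((B_1,…,B_n), (Y_1,…,Y_n)). -/
open CategoryTheory

/-- The piggyback relation passes to finite products of categories,
with morphisms in the product category being tuples composed componentwise. -/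
theorem piggy_pi {n : ℕ} {A : Fin n → Type*} [∀ i, Category (A i)]
    {B : Fin n → Type*} [∀ i, Category (B i)]
    (a x : ∀ i, A i) (b y : ∀ i, B i)
    (hp : ∀ i, Piggy (a i) (x i) (b i) (y i)) :
    Piggy (A := ∀ i, A i) (B := ∀ i, B i) a x b y := by
  choose M φ hMφ using hp
  refine ⟨{m : b ⟶ y | ∀ i, m i ∈ M i}, fun m i => φ i ⟨m.1 i, m.2 i⟩, ?_⟩
  intro h
  choose g hg using fun i => hMφ i (h i)
  refine ⟨g, ?_⟩
  rintro f ⟨e, rfl⟩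
  have : ∀ i, ∃ m : M i, (∃ e' : b i ⟶ y i, (m : b i ⟶ y i) = e' ≫ h i) ∧
      φ i m = e i ≫ g i := by
    intro i
    obtain ⟨m, hm, hm2⟩ := hg i ⟨e i, rfl⟩
    exact ⟨m, hm, hm2⟩
  choose m hm1 hm2 using this
  refine ⟨⟨fun i => (m i).1, fun i => (m i).2⟩, ?_, ?_⟩
  · choose e' he' using hm1
    exact ⟨e', funext he'⟩
  · funext i
    exact hm2 i
end

section
/- Let S be a relational structure that admits a finite monomorphic decomposition, with minimal monomorphic decomposition {B_1,…,B_s}. If S' is a substructure of S isomorphic to S, then S' ∩ B_i is nonempty for every i, and {S' ∩ B_1,…, S' ∩ B_s} is the minimal monomorphic decomposition of S'. -/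
open FirstOrder

set_option linter.unusedVariables false

/-- For a relational language, any subset of a structure carries an induced structure. -/
noncomputable instance indStruct {L : Language} [L.IsRelational] {S : Type} [L.Structure S]
    (A : Set S) : L.Structure A where
  funMap {n} f _ := isEmptyElim f
  RelMap {n} R v := Language.Structure.RelMap R fun i => ((v i : A) : S)

/-- `X` and `Y` induce isomorphic substructures of `S`. -/
def IsoSub (L : Language) [L.IsRelational] {S : Type} [L.Structure S] (X Y : Set S) : Prop :=
  Nonempty ((X : Set S) ≃[L] (Y : Set S))

/-- A monomorphic decomposition of a relational structure: a partition such that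
finite sets with equal traces on all blocks induce isomorphic substructures. -/
def IsMonoDecomp (L : Language) [L.IsRelational] (S : Type) [L.Structure S]
    {I : Type} (E : I → Set S) : Prop :=
  (∀ i, (E i).Nonempty) ∧ (∀ i j, i ≠ j → Disjoint (E i) (E j)) ∧ (⋃ i, E i) = Set.univ ∧
    ∀ X Y : Finset S, (∀ i, ((X : Set S) ∩ E i).ncard = ((Y : Set S) ∩ E i).ncard) →
      IsoSub L (X : Set S) (Y : Set S)

/-- The minimal monomorphic decomposition: every monomorphic decomposition refines it. -/
def IsMinimalMonoDecomp (L : Language) [L.IsRelational] (S : Type) [L.Structure S]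
    {I : Type} (E : I → Set S) : Prop :=
  IsMonoDecomp L S E ∧
    ∀ {J : Type} (F : J → Set S), IsMonoDecomp L S F → ∀ j, ∃ i, F j ⊆ E i

/-! ### Auxiliary material -/

/-- Transporting an induced substructure along an `L`-equivalence. -/
noncomputable def equivImage {L : Language} [L.IsRelational] {S T : Type}
    [L.Structure S] [L.Structure T] (e : S ≃[L] T) (X : Set S) :
    (X : Set S) ≃[L] ((e.toEquiv '' X : Set T)) where
  toEquiv := e.toEquiv.image X
  map_fun' f _ := isEmptyElim f
  map_rel' r v := e.map_rel' r _

/-- A subset of an induced substructure is isomorphic to the corresponding subset of the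
ambient structure. -/
noncomputable def valImage {L : Language} [L.IsRelational] {S : Type} [L.Structure S]
    {A : Set S} (X : Set A) :
    (X : Set A) ≃[L] ((Subtype.val '' X : Set S)) where
  toEquiv := Equiv.Set.image Subtype.val X Subtype.val_injective
  map_fun' f _ := isEmptyElim f
  map_rel' r v := Iff.rfl

lemma ncard_image_inter {α β : Type*} {f : α → β} (hf : Function.Injective f)
    (s : Set α) (t : Set β) : (f '' s ∩ t).ncard = (s ∩ f ⁻¹' t).ncard := by
  rw [← Set.image_inter_preimage, Set.ncard_image_of_injective _ hf]

lemma isoSub_of_val_image {L : Language} [L.IsRelational] {S : Type} [L.Structure S]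
    {A : Set S} {X Y : Set A}
    (h : IsoSub L (Subtype.val '' X) (Subtype.val '' Y)) : IsoSub L X Y := by
  obtain ⟨g⟩ := h
  exact ⟨((valImage Y).symm.comp g).comp (valImage X)⟩

lemma isoSub_of_equiv_image {L : Language} [L.IsRelational] {S T : Type}
    [L.Structure S] [L.Structure T] (e : S ≃[L] T) {X Y : Set S}
    (h : IsoSub L (e.toEquiv '' X) (e.toEquiv '' Y)) : IsoSub L X Y := by
  obtain ⟨g⟩ := h
  exact ⟨((equivImage e Y).symm.comp g).comp (equivImage e X)⟩

/-- Pulling back the isomorphy condition of a decomposition along an `L`-equivalence. -/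
lemma pullback_iso {L : Language} [L.IsRelational] {S T : Type}
    [L.Structure S] [L.Structure T] (e : S ≃[L] T) {ι : Type} (F : ι → Set T)
    (h4 : ∀ X Y : Finset T,
      (∀ i, ((X : Set T) ∩ F i).ncard = ((Y : Set T) ∩ F i).ncard) →
        IsoSub L (X : Set T) (Y : Set T))
    (X Y : Finset S)
    (h : ∀ i, ((X : Set S) ∩ e.toEquiv ⁻¹' F i).ncard
        = ((Y : Set S) ∩ e.toEquiv ⁻¹' F i).ncard) :
    IsoSub L (X : Set S) (Y : Set S) := by
  have hinj : Function.Injective e.toEquiv := e.toEquiv.injective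
  set X' : Finset T := X.map e.toEquiv.toEmbedding with hX'def
  set Y' : Finset T := Y.map e.toEquiv.toEmbedding with hY'def
  have hX' : (X' : Set T) = e.toEquiv '' (X : Set S) := by simp [hX'def]
  have hY' : (Y' : Set T) = e.toEquiv '' (Y : Set S) := by simp [hY'def]
  apply isoSub_of_equiv_image e
  rw [← hX', ← hY']
  refine h4 X' Y' fun i => ?_
  rw [hX', hY', ncard_image_inter hinj, ncard_image_inter hinj]
  exact h i

/-- Pulling back the isomorphy condition of a decomposition to an induced substructure. -/
lemma pullback_iso_val {L : Language} [L.IsRelational] {S : Type} [L.Structure S]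
    (A : Set S) {ι : Type} (F : ι → Set S)
    (h4 : ∀ X Y : Finset S,
      (∀ i, ((X : Set S) ∩ F i).ncard = ((Y : Set S) ∩ F i).ncard) →
        IsoSub L (X : Set S) (Y : Set S))
    (X Y : Finset A)
    (h : ∀ i, ((X : Set A) ∩ Subtype.val ⁻¹' F i).ncard
        = ((Y : Set A) ∩ Subtype.val ⁻¹' F i).ncard) :
    IsoSub L (X : Set A) (Y : Set A) := by
  have hinj : Function.Injective (Subtype.val : A → S) := Subtype.val_injective
  set X' : Finset S := X.map (Function.Embedding.subtype _) with hX'def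
  set Y' : Finset S := Y.map (Function.Embedding.subtype _) with hY'def
  have hX' : (X' : Set S) = Subtype.val '' (X : Set A) := by simp [hX'def]
  have hY' : (Y' : Set S) = Subtype.val '' (Y : Set A) := by simp [hY'def]
  apply isoSub_of_val_image
  rw [← hX', ← hY']
  refine h4 X' Y' fun i => ?_
  rw [hX', hY', ncard_image_inter hinj, ncard_image_inter hinj]
  exact h i

/-- If `S'` is a substructure of `S` isomorphic to `S` and `{B_1,…,B_s}` is the minimal
monomorphic decomposition of `S`, then each `S' ∩ B_i` is nonempty and the traces
`{S' ∩ B_i}` form the minimal monomorphic decomposition of `S'`. -/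
theorem trace_minimal_mono_decomp (L : Language) [L.IsRelational]
    (S : Type) [L.Structure S] {s : ℕ} (B : Fin s → Set S)
    (hmin : IsMinimalMonoDecomp L S B)
    (hfmd : ∃ (r : ℕ) (E : Fin r → Set S), IsMonoDecomp L S E)
    (S' : Set S) (hiso : Nonempty (S ≃[L] (S' : Set S))) :
    (∀ i, (S' ∩ B i).Nonempty) ∧
      IsMinimalMonoDecomp L (S' : Set S) (fun i => {x : S' | (x : S) ∈ B i}) := by
  classical
  obtain ⟨ψ⟩ := hiso
  obtain ⟨⟨hBne, hBdisj, hBcov, hBiso⟩, hBmin⟩ := hmin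
  -- basic facts
  have hBeq : ∀ (i j : Fin s) (a : S), a ∈ B i → a ∈ B j → i = j := by
    intro i j a h1 h2
    by_contra hne
    exact (Set.disjoint_left.mp (hBdisj i j hne) h1) h2
  have hBmem : ∀ a : S, ∃ i, a ∈ B i := by
    intro a
    have : a ∈ ⋃ i, B i := hBcov ▸ Set.mem_univ a
    exact Set.mem_iUnion.mp this
  -- the traces of B on S'
  set E' : Fin s → Set (S' : Set S) := fun i => {x : (S' : Set S) | (x : S) ∈ B i} with hE'def
  -- the isomorphy condition for the traces on S'
  have h4' : ∀ X Y : Finset (S' : Set S),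
      (∀ i, ((X : Set (S' : Set S)) ∩ E' i).ncard = ((Y : Set (S' : Set S)) ∩ E' i).ncard) →
        IsoSub L (X : Set (S' : Set S)) (Y : Set (S' : Set S)) := by
    intro X Y h
    exact pullback_iso_val S' B hBiso X Y h
  -- part A: every trace is nonempty
  set J : Set (Fin s) := {i | (S' ∩ B i).Nonempty} with hJdef
  have hE'ne : ∀ i : Fin s, i ∈ J → (E' i).Nonempty := by
    rintro i ⟨x, hx1, hx2⟩
    exact ⟨⟨x, hx1⟩, hx2⟩
  have hE'empty : ∀ i : Fin s, i ∉ J → E' i = ∅ := by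
    intro i hi
    ext ⟨x, hx⟩
    simp only [Set.mem_empty_iff_false, iff_false]
    intro hxB
    exact hi ⟨x, hx, hxB⟩
  -- the pullback to S of the (nonempty) traces is a monomorphic decomposition of S
  have hFJ : IsMonoDecomp L S (fun j : J => ψ.toEquiv ⁻¹' (E' j.1)) := by
    refine ⟨?_, ?_, ?_, ?_⟩
    · rintro ⟨i, hi⟩
      obtain ⟨y, hy⟩ := hE'ne i hi
      exact ⟨ψ.toEquiv.symm y, by simpa using hy⟩
    · rintro ⟨i, hi⟩ ⟨j, hj⟩ hne
      have hij : i ≠ j := fun h => hne (by simpa using h)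
      rw [Set.disjoint_left]
      intro a ha hb
      exact hij (hBeq i j (ψ.toEquiv a) ha hb)
    · apply Set.eq_univ_iff_forall.mpr
      intro x
      obtain ⟨i, hi⟩ := hBmem (ψ.toEquiv x)
      have hiJ : i ∈ J := ⟨(ψ.toEquiv x : S), (ψ.toEquiv x).2, hi⟩
      exact Set.mem_iUnion.mpr ⟨⟨i, hiJ⟩, hi⟩
    · intro X Y h
      refine pullback_iso ψ (fun j : J => E' j.1) ?_ X Y h
      intro X Y h
      refine h4' X Y fun i => ?_
      by_cases hi : i ∈ J
      · exact h ⟨i, hi⟩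
      · rw [hE'empty i hi]
        simp
  have hσall := hBmin (fun j : J => ψ.toEquiv ⁻¹' (E' j.1)) hFJ
  choose σ hσ using hσall
  have hσsurj : Function.Surjective σ := by
    intro i
    obtain ⟨x, hx⟩ := hBne i
    have hxU : x ∈ ⋃ j : J, ψ.toEquiv ⁻¹' (E' j.1) := hFJ.2.2.1 ▸ Set.mem_univ x
    obtain ⟨j, hj⟩ := Set.mem_iUnion.mp hxU
    exact ⟨j, hBeq _ _ x (hσ j hj) hx⟩
  have hJuniv : J = Set.univ := by
    refine Set.eq_of_subset_of_ncard_le (Set.subset_univ J) ?_ Set.finite_univ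
    have h1 : (Set.univ : Set (Fin s)).ncard = s := by
      rw [Set.ncard_univ]; simp
    have h2 : s ≤ J.ncard := by
      have h := Nat.card_le_card_of_surjective σ hσsurj
      rwa [Nat.card_coe_set_eq, Nat.card_eq_fintype_card, Fintype.card_fin] at h
    omega
  have partA : ∀ i, (S' ∩ B i).Nonempty := by
    intro i
    have : i ∈ J := by rw [hJuniv]; trivial
    exact this
  -- π : the pullback of each trace lies in a single block of B
  have hπ : ∀ i : Fin s, ψ.toEquiv ⁻¹' (E' i) ⊆ B (σ ⟨i, partA i⟩) := fun i => hσ ⟨i, partA i⟩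
  set π : Fin s → Fin s := fun i => σ ⟨i, partA i⟩ with hπdef
  have hπsurj : Function.Surjective π := by
    intro t
    obtain ⟨x, hx⟩ := hBne t
    obtain ⟨i, hi⟩ := hBmem ((ψ.toEquiv x : S))
    have hxE : x ∈ ψ.toEquiv ⁻¹' (E' i) := hi
    exact ⟨i, hBeq _ _ x (hπ i hxE) hx⟩
  have hπinj : Function.Injective π := Finite.injective_iff_surjective.mpr hπsurj
  -- part B : the traces form a monomorphic decomposition of S'
  have partB : IsMonoDecomp L (S' : Set S) E' := by
    refine ⟨fun i => hE'ne i (by rw [hJuniv]; trivial), ?_, ?_, h4'⟩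
    · intro i j hne
      rw [Set.disjoint_left]
      intro a ha hb
      exact hne (hBeq i j a ha hb)
    · apply Set.eq_univ_iff_forall.mpr
      intro y
      obtain ⟨i, hi⟩ := hBmem (y : S)
      exact Set.mem_iUnion.mpr ⟨i, hi⟩
  -- part C : minimality
  refine ⟨partA, partB, ?_⟩
  intro K F hF
  -- pull back F to a monomorphic decomposition of S
  have hG : IsMonoDecomp L S (fun k : K => ψ.toEquiv ⁻¹' F k) := by
    obtain ⟨hFne, hFdisj, hFcov, hFiso⟩ := hF
    refine ⟨?_, ?_, ?_, ?_⟩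
    · intro k
      obtain ⟨y, hy⟩ := hFne k
      exact ⟨ψ.toEquiv.symm y, by simpa using hy⟩
    · intro k1 k2 hne
      rw [Set.disjoint_left]
      intro a ha hb
      exact Set.disjoint_left.mp (hFdisj k1 k2 hne) ha hb
    · apply Set.eq_univ_iff_forall.mpr
      intro x
      have : ψ.toEquiv x ∈ ⋃ k, F k := hFcov ▸ Set.mem_univ _
      obtain ⟨k, hk⟩ := Set.mem_iUnion.mp this
      exact Set.mem_iUnion.mpr ⟨k, hk⟩
    · intro X Y h
      exact pullback_iso ψ F hFiso X Y h
  have hτall := hBmin (fun k : K => ψ.toEquiv ⁻¹' F k) hG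
  choose τ hτ using hτall
  intro k
  obtain ⟨i, hi⟩ := hπsurj (τ k)
  refine ⟨i, ?_⟩
  intro y hy
  have h1 : ψ.toEquiv.symm y ∈ B (τ k) := hτ k (by simpa using hy)
  obtain ⟨i', hi'⟩ := hBmem ((y : S))
  have h2 : ψ.toEquiv.symm y ∈ ψ.toEquiv ⁻¹' (E' i') := by
    show ((ψ.toEquiv (ψ.toEquiv.symm y) : (S' : Set S)) : S) ∈ B i'
    rw [ψ.toEquiv.apply_symm_apply]
    exact hi'
  have h3 : ψ.toEquiv.symm y ∈ B (π i') := hπ i' h2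
  have h4 : π i' = τ k := hBeq _ _ _ h3 h1
  have : i' = i := hπinj (by rw [h4, hi])
  exact this ▸ hi'
end

section
/- Let S be a relational structure admitting a finite monomorphic decomposition with minimal monomorphic decomposition {B_1,…,B_s}, and let B_j be one of the blocks with induced substructure B_j = S[B_j]. If there is a finite structure A with T(A, S[B_j]) = ∞ (A does not have a finite embedding big Ramsey degree in S[B_j]), then T(A, S) = ∞; consequently, if S has finite big Ramsey degrees then so does every S[B_i]. -/
open FirstOrder

set_option linter.unusedVariables false

/-- `A` has a finite (embedding) big Ramsey degree in `C`. -/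
def HasFinBRD (L : Language) (A C : Type) [L.Structure A] [L.Structure C] : Prop :=
  ∃ t : ℕ, ∀ (k : ℕ) (χ : (A ↪[L] C) → Fin k), ∃ w : C ↪[L] C,
    (χ '' {g : A ↪[L] C | ∃ f : A ↪[L] C, g = w.comp f}).ncard ≤ t

/-! Pulling the minimal monomorphic decomposition `B` of `S` back along a self-embedding `w`
gives another monomorphic decomposition, which must refine `B`; since `B` is finite this forces
`w` to map the blocks into the blocks along a permutation, so some power `w^(n+1)` maps `B j`
into itself. A colouring of the copies of `A` in `B j` extends to the copies of `A` in `S`, and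
every copy `w^(n+1) ∘ f` inside `B j` is `w ∘ (w^n ∘ f)`, so the restriction of `w^(n+1)` to
`B j` sees no more colours than `w` does on `S`. -/

open Set Function FirstOrder.Language

variable {L : Language}

theorem mapsTo_iterate_of_forall_mapsTo {α I : Type*} {f : α → α} {σ : I → I} {E : I → Set α}
    (h : ∀ i, MapsTo f (E i) (E (σ i))) : ∀ n i, MapsTo f^[n] (E i) (E (σ^[n] i))
  | 0, i => mapsTo_id (E i)
  | n + 1, i => (mapsTo_iterate_of_forall_mapsTo h n (σ i)).comp (h i)

namespace FirstOrder.Language.Embedding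

def iterate {M : Type*} [L.Structure M] (w : M ↪[L] M) : ℕ → M ↪[L] M
  | 0 => refl L M
  | n + 1 => w.comp (w.iterate n)

theorem coe_iterate {M : Type*} [L.Structure M] (w : M ↪[L] M) (n : ℕ) :
    ⇑(w.iterate n) = (⇑w)^[n] := by
  induction n with
  | zero => rfl
  | succ n ih => rw [iterate_succ', ← ih]; rfl

end FirstOrder.Language.Embedding

theorem HasFinBRD.of_embedding {A T C : Type} [L.Structure A] [L.Structure T] [L.Structure C]
    (ι : T ↪[L] C)
    (hι : ∀ w : C ↪[L] C, ∃ (w' : T ↪[L] T) (u : C ↪[L] C), ι.comp w' = w.comp (u.comp ι))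
    (h : HasFinBRD L A C) : HasFinBRD L A T := by
  obtain ⟨t, ht⟩ := h
  refine ⟨t, fun k χ => ?_⟩
  rcases isEmpty_or_nonempty (A ↪[L] T) with hA | ⟨⟨f₀⟩⟩
  · exact ⟨Embedding.refl L T, by simp [Set.eq_empty_of_isEmpty]⟩
  obtain ⟨w, hw⟩ := ht k (extend ι.comp χ fun _ => χ f₀)
  obtain ⟨w', u, hcomm⟩ := hι w
  refine ⟨w', le_trans (ncard_le_ncard ?_ (toFinite _)) hw⟩
  rintro _ ⟨_, ⟨f, rfl⟩, rfl⟩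
  exact ⟨ι.comp (w'.comp f), ⟨u.comp (ι.comp f), congrArg (·.comp f) hcomm⟩,
    ι.comp_injective.extend_apply _ _ _⟩

section Relational

variable [L.IsRelational] {S T : Type} [L.Structure S] [L.Structure T]

def Set.inclusionEmbedding (X : Set S) : X ↪[L] S where
  toFun := Subtype.val
  inj' := Subtype.val_injective
  map_fun' f := isEmptyElim f
  map_rel' _ _ := Iff.rfl

namespace FirstOrder.Language.Embedding

def restrict (v : S ↪[L] T) {X : Set S} {Y : Set T} (h : MapsTo v X Y) : X ↪[L] Y where
  toFun := MapsTo.restrict v X Y h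
  inj' := h.restrict_inj.mpr v.injective.injOn
  map_fun' f := isEmptyElim f
  map_rel' R x := v.map_rel R fun i => (x i : S)

noncomputable def imageEquiv (v : S ↪[L] T) (X : Set S) : X ≃[L] v '' X where
  toEquiv := Equiv.Set.image v X v.injective
  map_fun' f := isEmptyElim f
  map_rel' R x := v.map_rel R fun i => (x i : S)

end FirstOrder.Language.Embedding

namespace IsMonoDecomp

variable {I : Type} {E : I → Set S}

theorem exists_mem (hE : IsMonoDecomp L S E) (x : S) : ∃ i, x ∈ E i :=
  mem_iUnion.mp (hE.2.2.1 ▸ mem_univ x)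

theorem eq_of_mem (hE : IsMonoDecomp L S E) {x : S} {i j : I} (hi : x ∈ E i) (hj : x ∈ E j) :
    i = j := by
  by_contra hij
  exact disjoint_left.mp (hE.2.1 i j hij) hi hj

theorem preimage (hE : IsMonoDecomp L S E) (v : T ↪[L] S) :
    IsMonoDecomp L T fun m : {i // (v ⁻¹' E i).Nonempty} => v ⁻¹' E m := by
  classical
  refine ⟨fun m => m.2, fun m m' hm => (hE.2.1 m m' (hm ∘ Subtype.ext)).preimage v,
    eq_univ_of_forall fun x => ?_, fun X Y hXY => ?_⟩
  · obtain ⟨i, hi⟩ := hE.exists_mem (v x)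
    exact mem_iUnion.mpr ⟨⟨i, x, hi⟩, hi⟩
  have hcard : ∀ (Z : Finset T) i,
      ((Z.image v : Set S) ∩ E i).ncard = ((Z : Set T) ∩ v ⁻¹' E i).ncard := fun Z i => by
    rw [Finset.coe_image, ← image_inter_preimage, ncard_image_of_injective _ v.injective]
  obtain ⟨e⟩ := hE.2.2.2 (X.image v) (Y.image v) fun i => by
    rw [hcard, hcard]
    by_cases hi : (v ⁻¹' E i).Nonempty
    · exact hXY ⟨i, hi⟩
    · rw [not_nonempty_iff_eq_empty.mp hi, inter_empty, inter_empty]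
  rw [Finset.coe_image, Finset.coe_image] at e
  exact ⟨((v.imageEquiv Y).symm.comp e).comp (v.imageEquiv X)⟩

end IsMonoDecomp

namespace IsMinimalMonoDecomp

variable {I : Type} [Finite I] {E : I → Set S}

theorem exists_injective_mapsTo (hE : IsMinimalMonoDecomp L S E) (v : S ↪[L] S) :
    ∃ σ : I → I, Injective σ ∧ ∀ i, MapsTo v (E i) (E (σ i)) := by
  choose φ hφ using hE.2 _ (hE.1.preimage v)
  have hφ_eq : ∀ {i m x} (hx : x ∈ E i) (hm : v x ∈ E m), φ ⟨m, x, hm⟩ = i :=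
    fun hx hm => hE.1.eq_of_mem (hφ _ hm) hx
  have hsurj : Surjective φ := fun i => by
    obtain ⟨x, hx⟩ := hE.1.1 i
    obtain ⟨m, hm⟩ := hE.1.exists_mem (v x)
    exact ⟨_, hφ_eq hx hm⟩
  let e := Equiv.ofBijective φ (hsurj.bijective_of_nat_card_le (Finite.card_subtype_le _))
  refine ⟨fun i => (e.symm i).1, Subtype.val_injective.comp e.symm.injective, fun i x hx => ?_⟩
  obtain ⟨m, hm⟩ := hE.1.exists_mem (v x)
  show v x ∈ E (e.symm i).1
  rwa [show e.symm i = ⟨m, x, hm⟩ from e.symm_apply_eq.mpr (hφ_eq hx hm).symm]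

theorem exists_iterate_mapsTo (hE : IsMinimalMonoDecomp L S E) (v : S ↪[L] S) (j : I) :
    ∃ n, MapsTo (⇑v)^[n + 1] (E j) (E j) := by
  obtain ⟨σ, hσ, hv⟩ := hE.exists_injective_mapsTo v
  obtain ⟨n, hn, hper⟩ := hσ.mem_periodicPts j
  refine ⟨n - 1, ?_⟩
  rw [Nat.sub_add_cancel hn]
  simpa only [hper.eq] using mapsTo_iterate_of_forall_mapsTo hv n j

theorem hasFinBRD_block (hE : IsMinimalMonoDecomp L S E) (j : I) {A : Type} [L.Structure A]
    (h : HasFinBRD L A S) : HasFinBRD L A (E j) := by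
  refine h.of_embedding (Set.inclusionEmbedding (E j)) fun w => ?_
  obtain ⟨n, hn⟩ := hE.exists_iterate_mapsTo w j
  rw [← Embedding.coe_iterate] at hn
  exact ⟨(w.iterate (n + 1)).restrict hn, w.iterate n, rfl⟩

end IsMinimalMonoDecomp

end Relational

/-- If a block of the minimal monomorphic decomposition fails to have finite big Ramsey
degrees then so does the whole structure; consequently, if `S` has finite big Ramsey
degrees then so does every block. -/
theorem blocks_finite_brd (L : Language) [L.IsRelational]
    (S : Type) [L.Structure S] {s : ℕ} (B : Fin s → Set S)
    (hmin : IsMinimalMonoDecomp L S B) :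
    (∀ (j : Fin s) (A : Type) (iA : L.Structure A), Finite A →
        ¬ @HasFinBRD L A (B j) iA _ → ¬ @HasFinBRD L A S iA _) ∧
      ((∀ (A : Type) (iA : L.Structure A), Finite A → @HasFinBRD L A S iA _) →
        ∀ (i : Fin s) (A : Type) (iA : L.Structure A), Finite A →
          @HasFinBRD L A (B i) iA _) :=
  ⟨fun j _ _ _ hB hS => hB (hmin.hasFinBRD_block j hS),
    fun hS i A _ hA => hmin.hasFinBRD_block i (hS A _ hA)⟩
end

section
/- In the category P_ℚ (objects: finite chains and ℚ; morphisms from a finite chain n to ℚ: all partial maps, i.e., all set functions from subsets of n into ℚ; morphisms ℚ → ℚ: order embeddings), every finite chain n has finite big Ramsey degree in ℚ: there is t ∈ ℕ such that for every k and every coloring χ of all partial maps n ⇀ ℚ with k colors, there is an order embedding w : ℚ ↪ ℚ with |χ(w ∘ Hom(n,ℚ))| ≤ t. (Assume Devlin's theorem: every finite chain m has finite big Ramsey degree T(m,ℚ) in ℚ with respect to order embeddings.) -/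
/-- Post-composition of a partial map `n ⇀ ℚ` (encoded as an `Option`-valued map)
with an order embedding `h : ℚ ↪o ℚ`. -/
def pcomp (h : ℚ ↪o ℚ) {n : ℕ} (f : Fin n → Option ℚ) : Fin n → Option ℚ :=
  fun i => (f i).map h

/-- Every partial map `Fin n ⇀ ℚ` factors as a "pattern" `Fin n → Option (Fin n)`
followed by an order embedding `Fin n ↪o ℚ`. -/
lemma exists_pattern (n : ℕ) (f : Fin n → Option ℚ) :
    ∃ (p : Fin n → Option (Fin n)) (e : Fin n ↪o ℚ),
      f = fun i => (p i).map e := by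
  classical
  set S : Finset ℚ := Finset.univ.biUnion (fun i => (f i).toFinset) with hS
  have hcard : S.card ≤ n := by
    calc S.card ≤ ∑ i : Fin n, (f i).toFinset.card := Finset.card_biUnion_le
    _ ≤ ∑ _i : Fin n, 1 := by
        refine Finset.sum_le_sum fun i _ => ?_
        cases f i <;> simp
    _ = n := by simp
  obtain ⟨S', hsub, hcard'⟩ := Infinite.exists_superset_card_eq S n hcard
  let e0 : Fin n ≃o {x // x ∈ S'} := S'.orderIsoOfFin hcard'
  let e : Fin n ↪o ℚ := OrderEmbedding.ofStrictMono (fun i => (e0 i : ℚ)) (by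
    intro a b hab
    exact_mod_cast e0.strictMono hab)
  refine ⟨fun i => (f i).bind fun q =>
      if h : ∃ j, (e0 j : ℚ) = q then some h.choose else none, e, ?_⟩
  funext i
  cases hf : f i with
  | none => simp [hf]
  | some q =>
    have hqS : q ∈ S := by
      refine Finset.mem_biUnion.2 ⟨i, Finset.mem_univ _, ?_⟩
      simp [hf]
    have hqS' : q ∈ S' := hsub hqS
    have h : ∃ j, (e0 j : ℚ) = q := by
      obtain ⟨j, hj⟩ := e0.surjective ⟨q, hqS'⟩
      exact ⟨j, by rw [hj]⟩
    simp only [hf]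
    show some q = Option.map e ((some q).bind _)
    rw [Option.bind_some, dif_pos h, Option.map_some]
    exact congrArg some h.choose_spec.symm

/-- In the category `P_ℚ`, whose morphisms `n → ℚ` are all partial maps `n ⇀ ℚ`
and whose morphisms `ℚ → ℚ` are order embeddings, every finite chain `n` has a
finite big Ramsey degree in `ℚ`, assuming Devlin's theorem that every finite
chain has a finite big Ramsey degree in `ℚ` with respect to order embeddings. -/
theorem partial_maps_finite_brd
    (devlin : ∀ m : ℕ, ∃ t : ℕ, ∀ (k : ℕ) (χ : (Fin m ↪o ℚ) → Fin k),
      ∃ w : ℚ ↪o ℚ,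
        (χ '' {g : Fin m ↪o ℚ | ∃ f : Fin m ↪o ℚ, g = f.trans w}).ncard ≤ t)
    (n : ℕ) :
    ∃ t : ℕ, ∀ (k : ℕ) (χ : (Fin n → Option ℚ) → Fin k), ∃ w : ℚ ↪o ℚ,
      (χ '' {g : Fin n → Option ℚ | ∃ f : Fin n → Option ℚ, g = pcomp w f}).ncard ≤ t := by
  classical
  obtain ⟨t, ht⟩ := devlin n
  refine ⟨t * Fintype.card (Fin n → Option (Fin n)), ?_⟩
  intro k χ
  -- the induced coloring on order embeddings, with values in a finite function type
  let ψ : (Fin n ↪o ℚ) → ((Fin n → Option (Fin n)) → Fin k) :=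
    fun e p => χ (fun i => (p i).map e)
  let eK := Fintype.equivFin ((Fin n → Option (Fin n)) → Fin k)
  obtain ⟨w, hw⟩ := ht _ (fun e => eK (ψ e))
  refine ⟨w, ?_⟩
  set S : Set (Fin n ↪o ℚ) := {g | ∃ f : Fin n ↪o ℚ, g = f.trans w} with hSdef
  have hT : (ψ '' S).ncard ≤ t := by
    have : (fun e => eK (ψ e)) '' S = eK '' (ψ '' S) := by
      rw [Set.image_image]
    rw [this, Set.ncard_image_of_injective _ eK.injective] at hw
    exact hw
  have hfin : (ψ '' S).Finite := Set.toFinite _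
  -- the image finset of colors
  have hsub : χ '' {g : Fin n → Option ℚ | ∃ f : Fin n → Option ℚ, g = pcomp w f} ⊆
      ↑(hfin.toFinset.biUnion fun c => Finset.univ.image c) := by
    rintro x ⟨g, ⟨f, rfl⟩, rfl⟩
    obtain ⟨p, e, rfl⟩ := exists_pattern n f
    have hkey : pcomp w (fun i => (p i).map e) = fun i => (p i).map (e.trans w) := by
      funext i
      cases hp : p i <;> simp [pcomp, hp, RelEmbedding.trans_apply]
    refine Finset.mem_coe.2 (Finset.mem_biUnion.2 ⟨ψ (e.trans w), ?_, ?_⟩)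
    · rw [Set.Finite.mem_toFinset]
      exact ⟨e.trans w, ⟨e, rfl⟩, rfl⟩
    · exact Finset.mem_image.2 ⟨p, Finset.mem_univ _, by rw [hkey]⟩
  calc (χ '' {g : Fin n → Option ℚ | ∃ f : Fin n → Option ℚ, g = pcomp w f}).ncard
      ≤ (↑(hfin.toFinset.biUnion fun c => Finset.univ.image c) : Set (Fin k)).ncard :=
        Set.ncard_le_ncard hsub (Set.toFinite _)
    _ = (hfin.toFinset.biUnion fun c => Finset.univ.image c).card := Set.ncard_coe_finset _
    _ ≤ ∑ c ∈ hfin.toFinset, (Finset.univ.image c).card := Finset.card_biUnion_le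
    _ ≤ ∑ _c ∈ hfin.toFinset, Fintype.card (Fin n → Option (Fin n)) := by
        refine Finset.sum_le_sum fun c _ => ?_
        calc (Finset.univ.image c).card ≤ Finset.univ.card := Finset.card_image_le
          _ = Fintype.card (Fin n → Option (Fin n)) := rfl
    _ = hfin.toFinset.card * Fintype.card (Fin n → Option (Fin n)) := by
        rw [Finset.sum_const, smul_eq_mul]
    _ ≤ t * Fintype.card (Fin n → Option (Fin n)) := by
        have : hfin.toFinset.card = (ψ '' S).ncard :=
          (Set.ncard_eq_toFinset_card _ hfin).symm
        exact Nat.mul_le_mul_right _ (this ▸ hT)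
end

section
/- For finite chains n_1,…,n_s, in the s-fold product of the category P_ℚ, the pair ((n_1,…,n_s), (ℚ,…,ℚ)) ≺ (n_1 + … + n_s, ℚ) in P_ℚ, via the concatenation map ψ(f_1,…,f_s) = f_1 ⊕ … ⊕ f_s, which is injective and satisfies ψ((h,…,h) ∘ (f_1,…,f_s)) = h ∘ ψ(f_1,…,f_s) for every embedding h : ℚ ↪ ℚ. -/
/-- Concatenation `f_1 ⊕ ⋯ ⊕ f_s` of partial maps `f_i : n_i ⇀ ℚ`:
the entry at position `n_1 + ⋯ + n_{j-1} + i` is `f_j i`. -/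
def pconcat {s : ℕ} (n : Fin s → ℕ) (f : ∀ i, Fin (n i) → Option ℚ) :
    Fin (∑ i, n i) → Option ℚ :=
  fun j => ((List.ofFn fun i => List.ofFn (f i)).flatten).getD (j : ℕ) none

/-!
Concatenation is injective and commutes with post-composition by an embedding `h`. So one takes
`M` to be the image of concatenation, `φ` its inverse on `M`, and `g = (h, …, h)`: then
`(h, …, h) ∘ f = φ (h ∘ ψ f)` with `ψ f ∈ Hom(n_1 + ⋯ + n_s, ℚ)`.
-/

open Function Set

section Flatten

variable {α : Type*} {s : ℕ} {n : Fin s → ℕ}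

lemma List.length_flatten_ofFn_ofFn (f : ∀ i, Fin (n i) → α) :
    (List.ofFn fun i => List.ofFn (f i)).flatten.length = ∑ i, n i := by
  simp [List.sum_ofFn]

lemma List.flatten_ofFn_ofFn_injective :
    Injective fun f : ∀ i, Fin (n i) → α => (List.ofFn fun i => List.ofFn (f i)).flatten := by
  intro f g hfg
  have hlists : (List.ofFn fun i => List.ofFn (f i)) = List.ofFn fun i => List.ofFn (g i) :=
    List.eq_iff_flatten_eq.2 ⟨hfg, by simp [List.map_ofFn, comp_def]⟩
  funext i
  exact List.ofFn_injective (congrFun (List.ofFn_injective hlists) i)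

end Flatten

section Concat

variable {s : ℕ} (n : Fin s → ℕ)

lemma ofFn_pcomp (h : ℚ ↪o ℚ) {m : ℕ} (f : Fin m → Option ℚ) :
    List.ofFn (pcomp h f) = (List.ofFn f).map (Option.map h) :=
  List.map_ofFn.symm

lemma ofFn_pconcat (f : ∀ i, Fin (n i) → Option ℚ) :
    List.ofFn (pconcat n f) = (List.ofFn fun i => List.ofFn (f i)).flatten := by
  apply List.ext_getElem
  · rw [List.length_ofFn, List.length_flatten_ofFn_ofFn]
  · intro j _ hj
    rw [List.getElem_ofFn, pconcat, List.getD_eq_getElem _ _ hj]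

lemma pconcat_injective : Injective (pconcat n) := by
  intro f g hfg
  apply List.flatten_ofFn_ofFn_injective
  simpa only [ofFn_pconcat] using congrArg List.ofFn hfg

lemma pconcat_pcomp (h : ℚ ↪o ℚ) (f : ∀ i, Fin (n i) → Option ℚ) :
    pconcat n (fun i => pcomp h (f i)) = pcomp h (pconcat n f) := by
  apply List.ofFn_injective
  simp only [ofFn_pconcat, ofFn_pcomp, List.map_flatten, List.map_ofFn, comp_def]

end Concat

/-- In the `s`-fold product of the category `P_ℚ`,
`((n_1,…,n_s), (ℚ,…,ℚ)) ≺ (n_1 + ⋯ + n_s, ℚ)`, via the concatenation map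
`ψ(f_1,…,f_s) = f_1 ⊕ ⋯ ⊕ f_s`, which is injective and satisfies
`ψ((h,…,h) ∘ (f_1,…,f_s)) = h ∘ ψ(f_1,…,f_s)`. -/
theorem pconcat_piggy {s : ℕ} (n : Fin s → ℕ) :
    Function.Injective (pconcat n) ∧
    (∀ (h : ℚ ↪o ℚ) (f : ∀ i, Fin (n i) → Option ℚ),
      pconcat n (fun i => pcomp h (f i)) = pcomp h (pconcat n f)) ∧
    ∃ (M : Set (Fin (∑ i, n i) → Option ℚ))
      (φ : M → ∀ i, Fin (n i) → Option ℚ),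
      ∀ h : ℚ ↪o ℚ, ∃ g : ∀ _ : Fin s, ℚ ↪o ℚ,
        {F : ∀ i, Fin (n i) → Option ℚ |
            ∃ f : ∀ i, Fin (n i) → Option ℚ, F = fun i => pcomp (g i) (f i)} ⊆
          φ '' {m : M | ∃ e : Fin (∑ i, n i) → Option ℚ, (m : _) = pcomp h e} := by
  refine ⟨pconcat_injective n, pconcat_pcomp n, range (pconcat n), rangeSplitting (pconcat n),
    fun h => ⟨fun _ => h, ?_⟩⟩
  rintro _ ⟨f, rfl⟩
  exact ⟨rangeFactorization (pconcat n) fun i => pcomp h (f i), ⟨pconcat n f, pconcat_pcomp n h f⟩,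
    rightInverse_rangeSplitting (pconcat_injective n) _⟩
end

section
/- Let S be a countable structure admitting a finite monomorphic decomposition with decomposition into intervals E_1,…,E_r of a linear order ⊑ on S (where every local isomorphism of (S,⊑) preserving each interval E_i is a local automorphism of S). If a finite substructure A of S is such that for each tuple τ = (n_1,…,n_r) with n_1+…+n_r = |A| there is a bound N_τ on the number of colors realizable (on copies of A meeting E_i in exactly n_i points) inside a copy of S, then the structural big Ramsey degree of A in S is at most the sum of the N_τ over all such tuples τ. -/
open FirstOrder

set_option linter.unusedVariables false

/-- `X ⊆ S` carries a copy of `S`. -/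
def IsCopyOfS (L : Language) [L.IsRelational] {S : Type} [L.Structure S] (X : Set S) : Prop :=
  Nonempty (S ≃[L] (X : Set S))

/-- The copies of a finite substructure `A` inside `S` meeting each `E i` in exactly
`τ i` points. -/
def CopiesWithTrace (L : Language) [L.IsRelational] {S : Type} [L.Structure S]
    {r : ℕ} (E : Fin r → Set S) (A : Finset S) (τ : Fin r → ℕ) : Set (Finset S) :=
  {A' : Finset S | Nonempty (((A : Set S) : Type) ≃[L] ((A' : Set S) : Type)) ∧
    ∀ i, ((A' : Set S) ∩ E i).ncard = τ i}

/-- If a countable structure `S` decomposes into intervals `E_1, …, E_r` of a linear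
order `⊑` such that every local isomorphism of `(S,⊑)` preserving each interval is a
local automorphism of `S`, and for each tuple `τ = (n_1,…,n_r)` with `∑ n_i = |A|`
the copies of `A` with trace `τ` can be reduced to at most `N τ` colors inside any
copy of `S`, then the structural big Ramsey degree of `A` in `S` is at most `∑_τ N τ`. -/
theorem brd_sum_over_traces (L : Language) [L.IsRelational]
    (S : Type) [L.Structure S] [Countable S]
    (ble : S → S → Prop) (hord : IsLinearOrder S ble)
    {r : ℕ} (E : Fin r → Set S)
    (hpart : (∀ i j, i ≠ j → Disjoint (E i) (E j)) ∧ (⋃ i, E i) = Set.univ)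
    (hinterval : ∀ i, ∀ a b c : S, ble a b → ble b c → a ∈ E i → c ∈ E i → b ∈ E i)
    (hloc : ∀ (D : Set S) (p : S → S), Set.InjOn p D →
      (∀ a ∈ D, ∀ b ∈ D, (ble a b ↔ ble (p a) (p b))) →
      (∀ i, ∀ a ∈ D, (a ∈ E i ↔ p a ∈ E i)) →
      ∀ (m : ℕ) (R : L.Relations m) (v : Fin m → S), (∀ l, v l ∈ D) →
        (Language.Structure.RelMap R v ↔ Language.Structure.RelMap R (p ∘ v)))
    (A : Finset S) (N : (Fin r → ℕ) → ℕ)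
    (hN : ∀ τ : Fin r → ℕ, (∑ i, τ i) = A.card →
      ∀ X : Set S, IsCopyOfS L X → ∀ (k : ℕ) (χ : Finset S → Fin k),
        ∃ X' : Set S, X' ⊆ X ∧ IsCopyOfS L X' ∧
          (χ '' {A' : Finset S | A' ∈ CopiesWithTrace L E A τ ∧ (A' : Set S) ⊆ X'}).ncard
            ≤ N τ) :
    ∀ (k : ℕ) (χ : Finset S → Fin k),
      ∃ X : Set S, IsCopyOfS L X ∧
        (χ '' {A' : Finset S |
            Nonempty (((A : Set S) : Type) ≃[L] ((A' : Set S) : Type)) ∧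
            (A' : Set S) ⊆ X}).ncard
          ≤ ∑ τ ∈ Finset.Nat.antidiagonalTuple r A.card, N τ := by
  classical
  intro k χ
  -- the whole of `S` is a copy of `S`
  have huniv : IsCopyOfS L (Set.univ : Set S) :=
    ⟨⟨(Equiv.Set.univ S).symm, fun f _ => isEmptyElim f, fun {n} R x => Iff.rfl⟩⟩
  -- the main induction: handle any finite set of traces
  have main : ∀ T : Finset (Fin r → ℕ), (∀ τ ∈ T, (∑ i, τ i) = A.card) →
      ∀ X : Set S, IsCopyOfS L X →
      ∃ X' : Set S, X' ⊆ X ∧ IsCopyOfS L X' ∧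
        (χ '' {A' : Finset S |
            (∃ τ ∈ T, A' ∈ CopiesWithTrace L E A τ) ∧ (A' : Set S) ⊆ X'}).ncard
          ≤ ∑ τ ∈ T, N τ := by
    intro T
    induction T using Finset.induction with
    | empty =>
      intro _ X hX
      refine ⟨X, subset_rfl, hX, ?_⟩
      simp
    | @insert a T ha ih =>
      intro hsum X hX
      obtain ⟨X₁, hX₁X, hX₁, hb₁⟩ := hN a (hsum a (Finset.mem_insert_self a T)) X hX k χ
      obtain ⟨X', hX'X₁, hX', hb₂⟩ :=
        ih (fun τ hτ => hsum τ (Finset.mem_insert_of_mem hτ)) X₁ hX₁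
      refine ⟨X', hX'X₁.trans hX₁X, hX', ?_⟩
      rw [Finset.sum_insert ha]
      have hsub : (χ '' {A' : Finset S |
          (∃ τ ∈ insert a T, A' ∈ CopiesWithTrace L E A τ) ∧ (A' : Set S) ⊆ X'}) ⊆
          (χ '' {A' : Finset S | A' ∈ CopiesWithTrace L E A a ∧ (A' : Set S) ⊆ X₁}) ∪
          (χ '' {A' : Finset S |
            (∃ τ ∈ T, A' ∈ CopiesWithTrace L E A τ) ∧ (A' : Set S) ⊆ X'}) := by
        rintro c ⟨A', ⟨⟨τ, hτ, hA'τ⟩, hA'X'⟩, rfl⟩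
        rcases Finset.mem_insert.mp hτ with h | h
        · exact Or.inl ⟨A', ⟨h ▸ hA'τ, hA'X'.trans (hX'X₁)⟩, rfl⟩
        · exact Or.inr ⟨A', ⟨⟨τ, h, hA'τ⟩, hA'X'⟩, rfl⟩
      calc (χ '' {A' : Finset S |
            (∃ τ ∈ insert a T, A' ∈ CopiesWithTrace L E A τ) ∧ (A' : Set S) ⊆ X'}).ncard
          ≤ ((χ '' {A' : Finset S | A' ∈ CopiesWithTrace L E A a ∧ (A' : Set S) ⊆ X₁}) ∪
            (χ '' {A' : Finset S |
              (∃ τ ∈ T, A' ∈ CopiesWithTrace L E A τ) ∧ (A' : Set S) ⊆ X'})).ncard :=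
            Set.ncard_le_ncard hsub (Set.toFinite _)
        _ ≤ _ + _ := Set.ncard_union_le _ _
        _ ≤ N a + ∑ τ ∈ T, N τ := Nat.add_le_add hb₁ hb₂
  -- sums of traces in the antidiagonal
  have hmem : ∀ τ ∈ Finset.Nat.antidiagonalTuple r A.card, (∑ i, τ i) = A.card := by
    intro τ hτ
    simpa [Finset.Nat.mem_antidiagonalTuple] using hτ
  obtain ⟨X, _, hX, hb⟩ := main (Finset.Nat.antidiagonalTuple r A.card) hmem Set.univ huniv
  refine ⟨X, hX, le_trans (Set.ncard_le_ncard ?_ (Set.toFinite _)) hb⟩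
  -- every copy of `A` has some trace in the antidiagonal
  rintro c ⟨A', ⟨hiso, hA'X⟩, rfl⟩
  refine ⟨A', ⟨⟨fun i => ((A' : Set S) ∩ E i).ncard, ?_, hiso, fun i => rfl⟩, hA'X⟩, rfl⟩
  rw [Finset.Nat.mem_antidiagonalTuple]
  -- choose for each element the unique part containing it
  have hmemU : ∀ a : S, ∃ i, a ∈ E i := by
    intro a
    have : a ∈ ⋃ i, E i := hpart.2.symm ▸ Set.mem_univ a
    exact Set.mem_iUnion.mp this
  set f : S → Fin r := fun a => (hmemU a).choose with hf
  have hfE : ∀ a : S, a ∈ E (f a) := fun a => (hmemU a).choose_spec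
  have hEiff : ∀ (a : S) (i : Fin r), a ∈ E i ↔ f a = i := by
    intro a i
    constructor
    · intro hai
      by_contra hne
      exact (hpart.1 (f a) i hne).le_bot ⟨hfE a, hai⟩
    · rintro rfl; exact hfE a
  have hcardi : ∀ i, ((A' : Set S) ∩ E i).ncard = (A'.filter fun a => f a = i).card := by
    intro i
    rw [← Set.ncard_coe_finset]
    congr 1
    ext a
    simp [hEiff a i]
  have hsum' : ∑ i, ((A' : Set S) ∩ E i).ncard = A'.card := by
    simp only [hcardi]
    exact (Finset.card_eq_sum_card_fiberwise (f := f) (t := Finset.univ)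
      (fun a _ => Finset.mem_univ _)).symm
  rw [hsum']
  -- `A'` has the same cardinality as `A`
  obtain ⟨e⟩ := hiso
  have := Nat.card_congr e.toEquiv
  rw [Nat.card_coe_set_eq, Nat.card_coe_set_eq, Set.ncard_coe_finset,
    Set.ncard_coe_finset] at this
  exact this.symm
end

section
/- Let C be a category, X an object, and suppose Hom(X,X) is closed under composition with identity. Suppose Hom(A,X) decomposes as a finite disjoint union Hom(A,X) = H_1 ∪ … ∪ H_s such that each H_j is invariant under postcomposition (w ∘ H_j ⊆ H_j for all w ∈ Hom(X,X)) and for each j and each coloring χ_j of H_j with k colors there is w_j ∈ Hom(X,X) with |χ_j(w_j ∘ H_j)| ≤ T_j. Then for every coloring χ of Hom(A,X) with k colors there is w ∈ Hom(X,X) with |χ(w ∘ Hom(A,X))| ≤ T_1 + … + T_s. -/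
open CategoryTheory

/-- If `Hom(A,X)` is partitioned into finitely many classes `H_1, …, H_s`, each
invariant under postcomposition with self-morphisms of `X`, and on each class every
`k`-coloring can be reduced to at most `T_j` colors by some `w_j ∈ Hom(X,X)`, then
every `k`-coloring of `Hom(A,X)` can be reduced to at most `T_1 + ⋯ + T_s` colors. -/
theorem brd_of_invariant_partition {C : Type*} [Category C] (A X : C)
    {s : ℕ} (H : Fin s → Set (A ⟶ X)) (T : Fin s → ℕ)
    (hcover : ∀ f : A ⟶ X, ∃ j, f ∈ H j)
    (hdisj : ∀ j j' : Fin s, j ≠ j' → Disjoint (H j) (H j'))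
    (hinv : ∀ (j : Fin s) (w : X ⟶ X), ∀ f ∈ H j, f ≫ w ∈ H j)
    (k : ℕ)
    (hram : ∀ (j : Fin s) (χj : (A ⟶ X) → Fin k), ∃ w : X ⟶ X,
      (χj '' {f : A ⟶ X | ∃ e ∈ H j, f = e ≫ w}).ncard ≤ T j) :
    ∀ χ : (A ⟶ X) → Fin k, ∃ w : X ⟶ X,
      (χ '' {f : A ⟶ X | ∃ e : A ⟶ X, f = e ≫ w}).ncard ≤ ∑ j, T j := by
  intro χ
  suffices h : ∀ S : Finset (Fin s), ∃ w : X ⟶ X,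
      (χ '' {f : A ⟶ X | ∃ j ∈ S, ∃ e ∈ H j, f = e ≫ w}).ncard ≤ ∑ j ∈ S, T j by
    obtain ⟨w, hw⟩ := h Finset.univ
    refine ⟨w, le_trans (Set.ncard_le_ncard ?_ (Set.toFinite _)) hw⟩
    rintro x ⟨f, ⟨e, rfl⟩, rfl⟩
    obtain ⟨j, hj⟩ := hcover e
    exact ⟨e ≫ w, ⟨j, Finset.mem_univ j, e, hj, rfl⟩, rfl⟩
  intro S
  induction S using Finset.induction_on with
  | empty =>
    refine ⟨𝟙 X, ?_⟩
    simp
  | @insert j S hjS ih =>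
    obtain ⟨w', hw'⟩ := ih
    obtain ⟨wj, hwj⟩ := hram j (fun f => χ (f ≫ w'))
    refine ⟨wj ≫ w', ?_⟩
    have hsub : χ '' {f : A ⟶ X | ∃ j' ∈ insert j S, ∃ e ∈ H j', f = e ≫ (wj ≫ w')} ⊆
        ((fun f => χ (f ≫ w')) '' {f : A ⟶ X | ∃ e ∈ H j, f = e ≫ wj}) ∪
        (χ '' {f : A ⟶ X | ∃ j' ∈ S, ∃ e ∈ H j', f = e ≫ w'}) := by
      rintro x ⟨f, ⟨j', hj', e, he, rfl⟩, rfl⟩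
      rcases Finset.mem_insert.mp hj' with rfl | hj'
      · exact Or.inl ⟨e ≫ wj, ⟨e, he, rfl⟩, by simp⟩
      · exact Or.inr ⟨(e ≫ wj) ≫ w', ⟨j', hj', e ≫ wj, hinv j' wj e he, rfl⟩, by simp⟩
    calc (χ '' {f : A ⟶ X | ∃ j' ∈ insert j S, ∃ e ∈ H j', f = e ≫ (wj ≫ w')}).ncard
        ≤ (((fun f => χ (f ≫ w')) '' {f : A ⟶ X | ∃ e ∈ H j, f = e ≫ wj}) ∪
          (χ '' {f : A ⟶ X | ∃ j' ∈ S, ∃ e ∈ H j', f = e ≫ w'})).ncard :=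
          Set.ncard_le_ncard hsub (Set.toFinite _)
      _ ≤ _ + _ := Set.ncard_union_le _ _
      _ ≤ T j + ∑ j' ∈ S, T j' := add_le_add hwj hw'
      _ = ∑ j' ∈ insert j S, T j' := (Finset.sum_insert hjS).symm
end
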